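/- For every integer k ≥ 0, the sum, over all finite collections T of nonempty integer intervals [i, j] with 1 ≤ i ≤ j ≤ k that are pairwise disjoint as subsets of ℤ, of (−1)^{|T|} x^{2|T|} equals (−1)^k U_{2k}(x/2), as polynomials with integer coefficients. (This is the signed weight-generating function of trivial heaps of segments on [1,k].) -/

import Mathlib

/-!
A heap on `[1, k + 1]` either avoids `k + 1`, and is then a heap on `[1, k]`, or contains a
segment `[j + 1, k + 1]` with `j ≤ k`, whose removal leaves an arbitrary heap on `[1, j]`.
So `F k = ∑_T y ^ |T|` satisfies `F (k + 1) = F k + y * ∑_{j ≤ k} F j`, and taking differences,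
`F (k + 2) = (2 + y) F (k + 1) - F k`. For `y = -x²` this is, up to the sign `(-1) ^ k`, the
recurrence `U_{2k+4} = (x² - 2) U_{2k+2} - U_{2k}` of the even Chebyshev polynomials, and the
initial values `F 0 = 1`, `F 1 = 1 - x²` agree.
-/

/-- `U2I m` is the polynomial (with integer coefficients) `U_m(x/2)`, where `U_m`
is the `m`-th Chebyshev polynomial of the second kind: `U2I 0 = 1`, `U2I 1 = x`,
`U2I (m+2) = x · U2I (m+1) − U2I m`. -/
noncomputable def U2I : ℕ → Polynomial ℤ
  | 0 => 1
  | 1 => Polynomial.X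
  | n + 2 => Polynomial.X * U2I (n + 1) - U2I n

open Finset Polynomial

def segmentHeaps (k : ℕ) : Finset (Finset (ℕ × ℕ)) :=
  ((Icc 1 k ×ˢ Icc 1 k).powerset).filter
    (fun T : Finset (ℕ × ℕ) =>
      (∀ p ∈ T, p.1 ≤ p.2) ∧
      (∀ p ∈ T, ∀ q ∈ T, p ≠ q → Disjoint (Icc p.1 p.2) (Icc q.1 q.2)))

section SegmentHeaps

variable {T : Finset (ℕ × ℕ)} {i j k : ℕ}

theorem mem_segmentHeaps :
    T ∈ segmentHeaps k ↔ (∀ p ∈ T, 1 ≤ p.1 ∧ p.1 ≤ p.2 ∧ p.2 ≤ k) ∧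
      (T : Set (ℕ × ℕ)).Pairwise fun p q => Disjoint (Icc p.1 p.2) (Icc q.1 q.2) := by
  simp only [segmentHeaps, mem_filter, mem_powerset, subset_iff, mem_product, mem_Icc]
  constructor
  · rintro ⟨hbounds, hle, hdisj⟩
    exact ⟨fun p hp => ⟨(hbounds hp).1.1, hle p hp, (hbounds hp).2.2⟩, hdisj⟩
  · rintro ⟨hbounds, hdisj⟩
    refine ⟨fun p hp => ?_, fun p hp => (hbounds p hp).2.1, hdisj⟩
    have := hbounds p hp
    omega

theorem notMem_of_mem_segmentHeaps {q : ℕ × ℕ} (hT : T ∈ segmentHeaps j) (hq : j < q.2) :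
    q ∉ T := fun h => by
  have := (mem_segmentHeaps.1 hT).1 q h
  omega

theorem segmentHeaps_mono (hjk : j ≤ k) : segmentHeaps j ⊆ segmentHeaps k := by
  intro T hT
  rw [mem_segmentHeaps] at hT ⊢
  exact ⟨fun p hp => by have := hT.1 p hp; omega, hT.2⟩

theorem insert_mem_segmentHeaps (hT : T ∈ segmentHeaps j) (hjk : j ≤ k) :
    insert (j + 1, k + 1) T ∈ segmentHeaps (k + 1) := by
  obtain ⟨hbounds, hdisj⟩ := mem_segmentHeaps.1 hT
  have hsep : ∀ q ∈ T, Disjoint (Icc q.1 q.2) (Icc (j + 1) (k + 1)) := fun q hq =>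
    disjoint_left.2 fun m hm hm' => by
      have := hbounds q hq
      simp only [mem_Icc] at hm hm'
      omega
  rw [mem_segmentHeaps, coe_insert]
  refine ⟨?_, hdisj.insert fun q hq _ => ⟨(hsep q hq).symm, hsep q hq⟩⟩
  intro p hp
  rcases mem_insert.1 hp with rfl | hp
  · omega
  · have := hbounds p hp
    omega

theorem erase_mem_segmentHeaps (hT : T ∈ segmentHeaps (k + 1)) (hi : (i + 1, k + 1) ∈ T) :
    T.erase (i + 1, k + 1) ∈ segmentHeaps i := by
  obtain ⟨hbounds, hdisj⟩ := mem_segmentHeaps.1 hT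
  rw [mem_segmentHeaps, coe_erase]
  refine ⟨fun q hq => ?_, hdisj.mono Set.sdiff_subset⟩
  obtain ⟨hne, hqT⟩ := mem_erase.1 hq
  have := hbounds q hqT
  -- the right end of `q` lies in `q`, hence outside the removed segment `[i + 1, k + 1]`
  have hq2 : q.2 ∉ Icc (i + 1) (k + 1) :=
    disjoint_left.1 (hdisj hqT hi hne) (mem_Icc.2 ⟨this.2.1, le_rfl⟩)
  rw [mem_Icc] at hq2
  omega

theorem segmentHeaps_succ :
    segmentHeaps (k + 1) = segmentHeaps k ∪
      (range (k + 1)).biUnion fun j => (segmentHeaps j).image (insert (j + 1, k + 1)) := by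
  ext T
  simp only [mem_union, mem_biUnion, mem_range, mem_image]
  constructor
  · intro hT
    by_cases hlast : ∃ i, (i, k + 1) ∈ T
    · obtain ⟨i, hi⟩ := hlast
      obtain ⟨j, rfl⟩ : ∃ j, i = j + 1 :=
        Nat.exists_eq_add_one.2 ((mem_segmentHeaps.1 hT).1 _ hi).1
      have := ((mem_segmentHeaps.1 hT).1 _ hi).2.1
      exact Or.inr ⟨j, by omega, _, erase_mem_segmentHeaps hT hi, insert_erase hi⟩
    · push Not at hlast
      refine Or.inl (mem_segmentHeaps.2 ⟨fun p hp => ?_, (mem_segmentHeaps.1 hT).2⟩)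
      have := (mem_segmentHeaps.1 hT).1 p hp
      have := hlast p.1
      grind
  · rintro (hT | ⟨j, hj, S, hS, rfl⟩)
    · exact segmentHeaps_mono k.le_succ hT
    · exact insert_mem_segmentHeaps hS (by omega)

end SegmentHeaps

def segmentHeapSum {R : Type*} [CommRing R] (y : R) (k : ℕ) : R :=
  ∑ T ∈ segmentHeaps k, y ^ T.card

section HeapSum

variable {R : Type*} [CommRing R] (y : R)

theorem segmentHeapSum_zero : segmentHeapSum y 0 = 1 := by
  have : segmentHeaps 0 = {∅} := by
    ext T
    refine ⟨fun hT => mem_singleton.2 <| eq_empty_of_forall_notMem fun p hp => ?_, ?_⟩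
    · have := (mem_segmentHeaps.1 hT).1 p hp
      omega
    · intro hT
      simp [mem_singleton.1 hT, mem_segmentHeaps]
  simp [segmentHeapSum, this]

theorem segmentHeapSum_succ (k : ℕ) :
    segmentHeapSum y (k + 1) =
      segmentHeapSum y k + y * ∑ j ∈ range (k + 1), segmentHeapSum y j := by
  have hnew : ∀ j ∈ range (k + 1), ∀ S ∈ segmentHeaps j, (j + 1, k + 1) ∉ S :=
    fun j hj S hS => notMem_of_mem_segmentHeaps hS (mem_range.1 hj)
  rw [segmentHeapSum, segmentHeaps_succ, sum_union, sum_biUnion, mul_sum]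
  · congr 1
    refine sum_congr rfl fun j hj => ?_
    rw [sum_image fun S hS S' hS' h => by
      rw [← erase_insert (hnew j hj S hS), ← erase_insert (hnew j hj S' hS'), h]]
    rw [segmentHeapSum, mul_sum]
    exact sum_congr rfl fun S hS => by rw [card_insert_of_notMem (hnew j hj S hS), pow_succ']
  · intro j hj j' hj' hne
    simp only [Function.onFun]
    rw [disjoint_left]
    rintro _ hT hT'
    obtain ⟨S, hS, rfl⟩ := mem_image.1 hT
    obtain ⟨S', hS', h⟩ := mem_image.1 hT'
    have := h ▸ mem_insert_self (j' + 1, k + 1) S'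
    rcases mem_insert.1 this with h | h
    · exact hne (by simpa using h.symm)
    · exact notMem_of_mem_segmentHeaps hS (mem_range.1 hj) h
  · rw [disjoint_left]
    intro T hT hT'
    obtain ⟨j, hj, S, hS, rfl⟩ := by simpa only [mem_biUnion, mem_image] using hT'
    exact notMem_of_mem_segmentHeaps hT (by simp) (mem_insert_self _ _)

theorem segmentHeapSum_add_two (k : ℕ) :
    segmentHeapSum y (k + 2) = (2 + y) * segmentHeapSum y (k + 1) - segmentHeapSum y k := by
  rw [segmentHeapSum_succ y (k + 1), sum_range_succ, mul_add,
    ← sub_eq_iff_eq_add'.2 (segmentHeapSum_succ y k)]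
  ring

end HeapSum

theorem U2I_add_two (n : ℕ) : U2I (n + 2) = X * U2I (n + 1) - U2I n := by
  rw [U2I]

theorem U2I_add_four (n : ℕ) : U2I (n + 4) = (X ^ 2 - 2) * U2I (n + 2) - U2I n := by
  have e4 : U2I (n + 4) = X * U2I (n + 3) - U2I (n + 2) := U2I_add_two (n + 2)
  have e3 : U2I (n + 3) = X * U2I (n + 2) - U2I (n + 1) := U2I_add_two (n + 1)
  linear_combination e4 + X * e3 + U2I_add_two n

theorem segmentHeapSum_neg_X_sq (k : ℕ) :
    segmentHeapSum (-X ^ 2 : ℤ[X]) k = (-1) ^ k * U2I (2 * k) := by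
  induction k using Nat.twoStepInduction with
  | zero => simp [segmentHeapSum_zero, U2I]
  | one => simp [segmentHeapSum_succ, segmentHeapSum_zero, U2I, sub_eq_add_neg, sq]
  | more k hk hk1 =>
    rw [segmentHeapSum_add_two, hk, hk1, show 2 * (k + 2) = 2 * k + 4 by ring, U2I_add_four,
      show 2 * (k + 1) = 2 * k + 2 by ring]
    ring

theorem statement7 (k : ℕ) :
    ∑ T ∈ ((Finset.Icc 1 k ×ˢ Finset.Icc 1 k).powerset).filter
        (fun T : Finset (ℕ × ℕ) =>
          (∀ p ∈ T, p.1 ≤ p.2) ∧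
          (∀ p ∈ T, ∀ q ∈ T, p ≠ q →
            Disjoint (Finset.Icc p.1 p.2) (Finset.Icc q.1 q.2))),
        (-1 : Polynomial ℤ) ^ T.card * Polynomial.X ^ (2 * T.card)
      = (-1) ^ k * U2I (2 * k) := by
  rw [← segmentHeapSum_neg_X_sq]
  exact sum_congr rfl fun T _ => by rw [pow_mul, neg_pow (X ^ 2 : ℤ[X])]
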